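/- Assume (C, E, s) is an n-exangulated category in which, for every object X, the morphism X → 0 is a trivial inflation and the morphism 0 → X is a trivial deflation; for each object X fix a distinguished n-exangle X → 0 → ⋯ → 0 → ΣX ⇢(δ_X), and let Σ : C → C be the induced functor. Then Σ is dense (essentially surjective): for every object Y₀ of C there exists an object X₀ with ΣX₀ ≅ Y₀. -/

import Mathlib

/-!
Common definitions: complexes of length `n+2`, `n`-exangulated categories
(Herschend–Liu–Nakaoka), and `(n+2)`-angulated categories
(Geiss–Keller–Oppermann), formalized from scratch.
-/

open CategoryTheory CategoryTheory.Limits Opposite ZeroObject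

universe v u

namespace Paper

/-- A complex concentrated in degrees `0, …, n+1`.  Only the objects in degrees
`0, …, n+1` and the differentials `d 0, …, d n` carry information; all objects in
higher degrees are required to be zero. -/
structure ExCpx (n : ℕ) (C : Type u) [Category.{v} C] [Preadditive C] [HasZeroObject C] where
  obj : ℕ → C
  d : ∀ i, obj i ⟶ obj (i + 1)
  dd : ∀ i, i + 1 ≤ n → d i ≫ d (i + 1) = 0
  isZero_of_gt : ∀ i, n + 1 < i → IsZero (obj i)

variable {C : Type u} [Category.{v} C] [Preadditive C] [HasZeroObject C] [HasFiniteBiproducts C] [HasBinaryBiproducts C]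

/-- Morphisms of complexes of length `n+2`. -/
structure CpxHom {n : ℕ} (X Y : ExCpx n C) where
  f : ∀ i, X.obj i ⟶ Y.obj i
  comm : ∀ i, i ≤ n → X.d i ≫ f (i + 1) = f i ≫ Y.d i

/-- The identity morphism of a complex. -/
def CpxHom.id {n : ℕ} (X : ExCpx n C) : CpxHom X X :=
  ⟨fun _ => 𝟙 _, fun i _ => by simp⟩

/-- Composition of morphisms of complexes. -/
def CpxHom.comp {n : ℕ} {X Y Z : ExCpx n C} (φ : CpxHom X Y) (ψ : CpxHom Y Z) : CpxHom X Z :=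
  ⟨fun i => φ.f i ≫ ψ.f i, fun i hi => by
    rw [← Category.assoc, φ.comm i hi, Category.assoc, ψ.comm i hi, ← Category.assoc]⟩

/-- Chain homotopy between two morphisms of complexes of length `n+2`,
for complexes concentrated in degrees `0, …, n+1`. -/
def Homotopic (n : ℕ) {X Y : ExCpx n C} (φ ψ : CpxHom X Y) : Prop :=
  ∃ h : ∀ i, X.obj (i + 1) ⟶ Y.obj i,
    (φ.f 0 - ψ.f 0 = X.d 0 ≫ h 0) ∧
    (∀ i, i + 1 ≤ n → φ.f (i + 1) - ψ.f (i + 1) = X.d (i + 1) ≫ h (i + 1) + h i ≫ Y.d i) ∧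
    (φ.f (n + 1) - ψ.f (n + 1) = h n ≫ Y.d n)

/-- Homotopy equivalence of complexes which is the identity on the two end terms. -/
def FixedEndsHtpyEquiv (n : ℕ) (X Y : ExCpx n C) (h0 : X.obj 0 = Y.obj 0)
    (h1 : X.obj (n + 1) = Y.obj (n + 1)) : Prop :=
  ∃ (u : CpxHom X Y) (v : CpxHom Y X),
    u.f 0 = eqToHom h0 ∧ u.f (n + 1) = eqToHom h1 ∧
    v.f 0 = eqToHom h0.symm ∧ v.f (n + 1) = eqToHom h1.symm ∧
    Homotopic n (u.comp v) (CpxHom.id X) ∧ Homotopic n (v.comp u) (CpxHom.id Y)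

/-- `EE E B A` is the abelian group `E(B, A)` of `E`-extensions. -/
abbrev EE (E : Cᵒᵖ ⥤ C ⥤ AddCommGrpCat.{v}) (B A : C) : Type v := (E.obj (op B)).obj A

/-- Covariant action `f_* δ` of `E` on extensions. -/
def push {E : Cᵒᵖ ⥤ C ⥤ AddCommGrpCat.{v}} {B A A' : C} (f : A ⟶ A') (δ : EE E B A) :
    EE E B A' := ((E.obj (op B)).map f) δ

/-- Contravariant action `g^* δ` of `E` on extensions. -/
def pull {E : Cᵒᵖ ⥤ C ⥤ AddCommGrpCat.{v}} {B B' A : C} (g : B' ⟶ B) (δ : EE E B A) :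
    EE E B' A := ((E.map g.op).app A) δ

/-- Transport of extensions along equalities of objects. -/
def castE {E : Cᵒᵖ ⥤ C ⥤ AddCommGrpCat.{v}} {B B' A A' : C} (hB : B = B') (hA : A = A')
    (δ : EE E B A) : EE E B' A' := by subst hB; subst hA; exact δ

/-- The type of a "distinguished `n`-exangle" predicate. -/
def DistType (n : ℕ) (C : Type u) [Category.{v} C] [Preadditive C] [HasZeroObject C]
    (E : Cᵒᵖ ⥤ C ⥤ AddCommGrpCat.{v}) : Type (max u v) :=
  ∀ X : ExCpx n C, EE E (X.obj (n + 1)) (X.obj 0) → Prop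

/-- `f` is an inflation: it appears as the `0`-th differential of some
distinguished `n`-exangle. -/
def InflationOf {n : ℕ} {E : Cᵒᵖ ⥤ C ⥤ AddCommGrpCat.{v}} (D : DistType n C E)
    {A B : C} (f : A ⟶ B) : Prop :=
  ∃ (X : ExCpx n C) (δ : EE E (X.obj (n + 1)) (X.obj 0)) (h0 : X.obj 0 = A) (h1 : X.obj 1 = B),
    D X δ ∧ X.d 0 = eqToHom h0 ≫ f ≫ eqToHom h1.symm

/-- `f` is a deflation: it appears as the `n`-th differential of some
distinguished `n`-exangle. -/
def DeflationOf {n : ℕ} {E : Cᵒᵖ ⥤ C ⥤ AddCommGrpCat.{v}} (D : DistType n C E)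
    {A B : C} (f : A ⟶ B) : Prop :=
  ∃ (X : ExCpx n C) (δ : EE E (X.obj (n + 1)) (X.obj 0)) (h0 : X.obj n = A)
    (h1 : X.obj (n + 1) = B),
    D X δ ∧ X.d n = eqToHom h0 ≫ f ≫ eqToHom h1.symm

/-- The mapping cone of a morphism of complexes whose `0`-th component is
(an identity up to equality of objects):
`X₁ → X₂ ⊕ Y₁ → ⋯ → X_{n+1} ⊕ Yₙ → Y_{n+1}` with the usual matrix differentials. -/
def IsMappingCone (n : ℕ) {X Y : ExCpx n C} (φ : CpxHom X Y) (M : ExCpx n C) : Prop :=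
  ∃ (e0 : M.obj 0 = X.obj 1) (etop : M.obj (n + 1) = Y.obj (n + 1))
    (emid : ∀ i, 1 ≤ i → i ≤ n → M.obj i = ((X.obj (i + 1)) ⊞ (Y.obj i))),
    (∀ hn : 1 ≤ n,
      M.d 0 = eqToHom e0 ≫ biprod.lift (-(X.d 1)) (φ.f 1) ≫ eqToHom (emid 1 le_rfl hn).symm) ∧
    (∀ i (h1 : 1 ≤ i) (h2 : i + 1 ≤ n),
      M.d i = eqToHom (emid i (by omega) (by omega)) ≫
        biprod.desc (biprod.lift (-(X.d (i + 1))) (φ.f (i + 1))) (biprod.lift 0 (Y.d i)) ≫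
        eqToHom (emid (i + 1) (by omega) (by omega)).symm) ∧
    (∀ hn : 1 ≤ n,
      M.d n = eqToHom (emid n hn le_rfl) ≫ biprod.desc (φ.f (n + 1)) (Y.d n) ≫ eqToHom etop.symm)

/-- The mapping cocone of a morphism of complexes whose `(n+1)`-st component is
(an identity up to equality of objects):
`X₀ → Y₀ ⊕ X₁ → ⋯ → Y_{n-1} ⊕ Xₙ → Yₙ`. -/
def IsMappingCocone (n : ℕ) {X Y : ExCpx n C} (φ : CpxHom X Y) (M : ExCpx n C) : Prop :=
  ∃ (e0 : M.obj 0 = X.obj 0) (etop : M.obj (n + 1) = Y.obj n)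
    (emid : ∀ i, i + 1 ≤ n → M.obj (i + 1) = ((Y.obj i) ⊞ (X.obj (i + 1)))),
    (∀ hn : 1 ≤ n,
      M.d 0 = eqToHom e0 ≫ biprod.lift (φ.f 0) (X.d 0) ≫ eqToHom (emid 0 hn).symm) ∧
    (∀ i (h2 : i + 2 ≤ n),
      M.d (i + 1) = eqToHom (emid i (by omega)) ≫
        biprod.desc (biprod.lift (-(Y.d i)) 0) (biprod.lift (φ.f (i + 1)) (X.d (i + 1))) ≫
        eqToHom (emid (i + 1) (by omega)).symm) ∧
    (∀ i (hi : i + 1 = n),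
      M.d (i + 1) = eqToHom (emid i hi.le) ≫
        biprod.desc (-(Y.d i) ≫ eqToHom (show Y.obj (i + 1) = Y.obj n by rw [hi]))
          (φ.f (i + 1) ≫ eqToHom (show Y.obj (i + 1) = Y.obj n by rw [hi])) ≫
        eqToHom (show Y.obj n = M.obj (i + 2) by subst hi; exact etop.symm))

/-- An `n`-exangulated structure `(𝔼, 𝔰)` on an additive category `C`:
`Dist X δ` says that `⟨X, δ⟩` is a distinguished `n`-exangle (i.e. `𝔰(δ) = [X]`),
together with all the axioms of Herschend–Liu–Nakaoka: `𝔰` is an exact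
realization ((R0), (R1), (R2), realizing every extension, with values in
homotopy classes of complexes with fixed end terms) satisfying (EA1), (EA2)
and (EA2op). -/
structure NExStruct (n : ℕ) (C : Type u) [Category.{v} C] [Preadditive C] [HasZeroObject C]
    [HasFiniteBiproducts C] [HasBinaryBiproducts C] (E : Cᵒᵖ ⥤ C ⥤ AddCommGrpCat.{v}) : Type (max u v) where
  Dist : DistType n C E
  /-- every extension is realized by some distinguished `n`-exangle -/
  realize : ∀ {A B : C} (δ : EE E B A),
    ∃ (X : ExCpx n C) (h0 : X.obj 0 = A) (h1 : X.obj (n + 1) = B),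
      Dist X (castE h1.symm h0.symm δ)
  /-- distinguished `n`-exangles are `E`-attached complexes -/
  attached_push : ∀ (X : ExCpx n C) (δ : EE E (X.obj (n + 1)) (X.obj 0)),
    Dist X δ → push (X.d 0) δ = 0
  attached_pull : ∀ (X : ExCpx n C) (δ : EE E (X.obj (n + 1)) (X.obj 0)),
    Dist X δ → pull (X.d n) δ = 0
  /-- the realization takes values in homotopy equivalence classes: closure -/
  dist_htpy : ∀ (X Y : ExCpx n C) (h0 : X.obj 0 = Y.obj 0) (h1 : X.obj (n + 1) = Y.obj (n + 1))
    (δ : EE E (X.obj (n + 1)) (X.obj 0)),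
    Dist X δ → FixedEndsHtpyEquiv n X Y h0 h1 → Dist Y (castE h1 h0 δ)
  /-- the realization takes values in homotopy equivalence classes: uniqueness -/
  dist_unique : ∀ (X Y : ExCpx n C) (h0 : X.obj 0 = Y.obj 0) (h1 : X.obj (n + 1) = Y.obj (n + 1))
    (δ : EE E (X.obj (n + 1)) (X.obj 0)),
    Dist X δ → Dist Y (castE h1 h0 δ) → FixedEndsHtpyEquiv n X Y h0 h1
  /-- (R0): morphisms of extensions lift to morphisms of the realizing complexes -/
  liftMor : ∀ (X Y : ExCpx n C) (δ : EE E (X.obj (n + 1)) (X.obj 0))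
    (ρ : EE E (Y.obj (n + 1)) (Y.obj 0)) (a : X.obj 0 ⟶ Y.obj 0)
    (c : X.obj (n + 1) ⟶ Y.obj (n + 1)),
    Dist X δ → Dist Y ρ → push a δ = pull c ρ →
    ∃ φ : CpxHom X Y, φ.f 0 = a ∧ φ.f (n + 1) = c
  /-- (R1), contravariant exactness at the middle terms -/
  exact_contra_mid : ∀ (X : ExCpx n C) (δ : EE E (X.obj (n + 1)) (X.obj 0)), Dist X δ →
    ∀ (W : C) (i : ℕ), i + 1 ≤ n → ∀ g : W ⟶ X.obj (i + 1),
      g ≫ X.d (i + 1) = 0 → ∃ h : W ⟶ X.obj i, h ≫ X.d i = g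
  /-- (R1), contravariant exactness at the last term -/
  exact_contra_top : ∀ (X : ExCpx n C) (δ : EE E (X.obj (n + 1)) (X.obj 0)), Dist X δ →
    ∀ (W : C) (g : W ⟶ X.obj (n + 1)), pull g δ = 0 → ∃ h : W ⟶ X.obj n, h ≫ X.d n = g
  /-- (R1), covariant exactness at the middle terms -/
  exact_cov_mid : ∀ (X : ExCpx n C) (δ : EE E (X.obj (n + 1)) (X.obj 0)), Dist X δ →
    ∀ (W : C) (i : ℕ), i + 1 ≤ n → ∀ g : X.obj (i + 1) ⟶ W,
      X.d i ≫ g = 0 → ∃ h : X.obj (i + 2) ⟶ W, X.d (i + 1) ≫ h = g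
  /-- (R1), covariant exactness at the first term -/
  exact_cov_bot : ∀ (X : ExCpx n C) (δ : EE E (X.obj (n + 1)) (X.obj 0)), Dist X δ →
    ∀ (W : C) (g : X.obj 0 ⟶ W), push g δ = 0 → ∃ h : X.obj 1 ⟶ W, X.d 0 ≫ h = g
  /-- (R2): the zero extension `0 ∈ E(0, A)` is realized by the trivial complex -/
  r2 : ∀ A : C, ∃ X : ExCpx n C, X.obj 0 = A ∧ IsIso (X.d 0) ∧
    (∀ i, 2 ≤ i → IsZero (X.obj i)) ∧ Dist X 0
  /-- (R2), dual: the zero extension `0 ∈ E(A, 0)` is realized by the trivial complex -/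
  r2op : ∀ A : C, ∃ X : ExCpx n C, X.obj (n + 1) = A ∧ IsIso (X.d n) ∧
    (∀ i, i + 1 ≤ n → IsZero (X.obj i)) ∧ Dist X 0
  /-- (EA1): compositions of inflations are inflations -/
  ea1_infl : ∀ {A B D : C} (f : A ⟶ B) (g : B ⟶ D),
    InflationOf Dist f → InflationOf Dist g → InflationOf Dist (f ≫ g)
  /-- (EA1): compositions of deflations are deflations -/
  ea1_defl : ∀ {A B D : C} (f : A ⟶ B) (g : B ⟶ D),
    DeflationOf Dist f → DeflationOf Dist g → DeflationOf Dist (f ≫ g)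
  /-- (EA2): good lifts exist -/
  ea2 : ∀ (X Y : ExCpx n C) (h0 : Y.obj 0 = X.obj 0) (ρ : EE E (Y.obj (n + 1)) (Y.obj 0))
    (c : X.obj (n + 1) ⟶ Y.obj (n + 1)),
    Dist Y ρ → Dist X (castE rfl h0 (pull c ρ)) →
    ∃ φ : CpxHom X Y, φ.f 0 = eqToHom h0.symm ∧ φ.f (n + 1) = c ∧
      ∃ (M : ExCpx n C) (hM0 : M.obj 0 = X.obj 1) (hMtop : M.obj (n + 1) = Y.obj (n + 1)),
        IsMappingCone n φ M ∧
        Dist M (castE hMtop.symm hM0.symm (push (eqToHom h0 ≫ X.d 0) ρ))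
  /-- (EA2op): dually, good lifts exist -/
  ea2op : ∀ (X Y : ExCpx n C) (htop : Y.obj (n + 1) = X.obj (n + 1))
    (ρ : EE E (Y.obj (n + 1)) (Y.obj 0)) (a : Y.obj 0 ⟶ X.obj 0),
    Dist Y ρ → Dist X (castE htop rfl (push a ρ)) →
    ∃ φ : CpxHom Y X, φ.f 0 = a ∧ φ.f (n + 1) = eqToHom htop ∧
      ∃ (M : ExCpx n C) (hM0 : M.obj 0 = Y.obj 0) (hMtop : M.obj (n + 1) = X.obj n),
        IsMappingCocone n φ M ∧
        Dist M (castE hMtop.symm hM0.symm (pull (X.d n ≫ eqToHom htop.symm) ρ))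

/-- The morphism `A → 0` is a trivial inflation: it embeds in a distinguished
`n`-exangle `A → 0 → ⋯ → 0 → Y ⇢ δ`. -/
def TrivialInflation {n : ℕ} {E : Cᵒᵖ ⥤ C ⥤ AddCommGrpCat.{v}} (σ : NExStruct n C E)
    (A : C) : Prop :=
  ∃ (X : ExCpx n C) (δ : EE E (X.obj (n + 1)) (X.obj 0)),
    σ.Dist X δ ∧ X.obj 0 = A ∧ ∀ i, 1 ≤ i → i ≤ n → IsZero (X.obj i)

/-- The morphism `0 → A` is a trivial deflation: it embeds in a distinguished
`n`-exangle `Z → 0 → ⋯ → 0 → A ⇢ δ`. -/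
def TrivialDeflation {n : ℕ} {E : Cᵒᵖ ⥤ C ⥤ AddCommGrpCat.{v}} (σ : NExStruct n C E)
    (A : C) : Prop :=
  ∃ (X : ExCpx n C) (δ : EE E (X.obj (n + 1)) (X.obj 0)),
    σ.Dist X δ ∧ X.obj (n + 1) = A ∧ ∀ i, 1 ≤ i → i ≤ n → IsZero (X.obj i)

/-- An `(n+2)`-`Σ`-sequence `A₀ → A₁ → ⋯ → A_{n+1} → Σ A₀`. -/
structure AngSeq (n : ℕ) (C : Type u) [Category.{v} C] (S : C ⥤ C) where
  obj : ℕ → C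
  d : ∀ i, obj i ⟶ obj (i + 1)
  last : obj (n + 1) ⟶ S.obj (obj 0)

/-- A morphism of `(n+2)`-`Σ`-sequences. -/
structure AngHom {n : ℕ} {S : C ⥤ C} (T T' : AngSeq n C S) where
  f : ∀ i, T.obj i ⟶ T'.obj i
  comm : ∀ i, i ≤ n → T.d i ≫ f (i + 1) = f i ≫ T'.d i
  comm_last : T.last ≫ S.map (f 0) = f (n + 1) ≫ T'.last

/-- `T` and `T'` are isomorphic `(n+2)`-`Σ`-sequences. -/
def IsIsoSeq (n : ℕ) {S : C ⥤ C} (T T' : AngSeq n C S) : Prop :=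
  ∃ φ : AngHom T T', ∀ i, i ≤ n + 1 → IsIso (φ.f i)

/-- `Z` is a direct sum of the `(n+2)`-`Σ`-sequences `X` and `Y`. -/
def IsDirectSumSeq (n : ℕ) {S : C ⥤ C} (Z X Y : AngSeq n C S) : Prop :=
  ∃ (p : AngHom Z X) (q : AngHom Z Y) (ix : AngHom X Z) (iy : AngHom Y Z),
    (∀ i, i ≤ n + 1 → ix.f i ≫ p.f i = 𝟙 _) ∧ (∀ i, i ≤ n + 1 → iy.f i ≫ q.f i = 𝟙 _) ∧
    (∀ i, i ≤ n + 1 → ix.f i ≫ q.f i = 0) ∧ (∀ i, i ≤ n + 1 → iy.f i ≫ p.f i = 0) ∧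
    (∀ i, i ≤ n + 1 → p.f i ≫ ix.f i + q.f i ≫ iy.f i = 𝟙 _)

/-- `R` is the left rotation of the `(n+2)`-`Σ`-sequence `T`. -/
def IsLeftRotation (n : ℕ) {S : C ⥤ C} (T R : AngSeq n C S) : Prop :=
  ∃ (e : ∀ i, i ≤ n → R.obj i = T.obj (i + 1)) (etop : R.obj (n + 1) = S.obj (T.obj 0)),
    (∀ i (hi : i + 1 ≤ n), R.d i = eqToHom (e i (by omega)) ≫ T.d (i + 1) ≫
      eqToHom (e (i + 1) hi).symm) ∧
    (R.d n = eqToHom (e n le_rfl) ≫ T.last ≫ eqToHom etop.symm) ∧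
    (R.last = eqToHom etop ≫ (((-1 : ℤ) ^ n) • S.map (T.d 0)) ≫
      eqToHom (congrArg S.obj (e 0 (Nat.zero_le n))).symm)

/-- `M` is the mapping cone of the morphism `Φ` of `(n+2)`-`Σ`-sequences. -/
def IsMappingConeSeq (n : ℕ) {S : C ⥤ C} {T T' : AngSeq n C S} (Φ : AngHom T T')
    (M : AngSeq n C S) : Prop :=
  ∃ (e : ∀ i, i ≤ n → M.obj i = ((T.obj (i + 1)) ⊞ (T'.obj i)))
    (etop : M.obj (n + 1) = ((S.obj (T.obj 0)) ⊞ (T'.obj (n + 1)))),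
    (∀ i (hi : i + 1 ≤ n), M.d i = eqToHom (e i (by omega)) ≫
        biprod.desc (biprod.lift (-(T.d (i + 1))) (Φ.f (i + 1))) (biprod.lift 0 (T'.d i)) ≫
        eqToHom (e (i + 1) hi).symm) ∧
    (M.d n = eqToHom (e n le_rfl) ≫
        biprod.desc (biprod.lift (-(T.last)) (Φ.f (n + 1))) (biprod.lift 0 (T'.d n)) ≫
        eqToHom etop.symm) ∧
    (M.last = eqToHom etop ≫
        biprod.desc ((-(S.map (T.d 0) ≫ S.map biprod.inl)) + (S.map (Φ.f 0) ≫ S.map biprod.inr))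
          (T'.last ≫ S.map biprod.inr) ≫
        eqToHom (congrArg S.obj (e 0 (Nat.zero_le n))).symm)

/-- An `(n+2)`-angulated structure `(Σ, Θ)` on an additive category `C`
(Geiss–Keller–Oppermann): `Σ = S` is an auto-equivalence, `Θ = Theta` is a class of
`(n+2)`-`Σ`-sequences satisfying the axioms (N1)–(N4). -/
structure NAngStruct (n : ℕ) (C : Type u) [Category.{v} C] [Preadditive C] [HasZeroObject C]
    [HasFiniteBiproducts C] [HasBinaryBiproducts C] (S : C ⥤ C) : Type (max u v) where
  /-- `Σ` is an auto-equivalence -/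
  eqv : S.IsEquivalence
  Theta : AngSeq n C S → Prop
  /-- (N1)(a): closed under isomorphisms -/
  iso_closed : ∀ T T' : AngSeq n C S, Theta T → IsIsoSeq n T T' → Theta T'
  /-- (N1)(a): closed under direct sums -/
  sum_closed : ∀ Z X Y : AngSeq n C S, Theta X → Theta Y → IsDirectSumSeq n Z X Y → Theta Z
  /-- (N1)(a): closed under direct summands -/
  summand_closed : ∀ Z X Y : AngSeq n C S, Theta Z → IsDirectSumSeq n Z X Y → Theta X
  /-- (N1)(b): trivial sequences belong to `Theta` -/
  trivial_mem : ∀ T : AngSeq n C S, IsIso (T.d 0) →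
    (∀ i, 2 ≤ i → i ≤ n + 1 → IsZero (T.obj i)) → Theta T
  /-- (N1)(c): every morphism extends to an `(n+2)`-angle -/
  extend_mor : ∀ {A B : C} (f : A ⟶ B), ∃ T : AngSeq n C S, Theta T ∧
    ∃ (h0 : T.obj 0 = A) (h1 : T.obj 1 = B), T.d 0 = eqToHom h0 ≫ f ≫ eqToHom h1.symm
  /-- (N2): `Theta` is closed under left rotation -/
  rot : ∀ T R : AngSeq n C S, IsLeftRotation n T R → Theta T → Theta R
  /-- (N2): `Theta` is closed under right rotation -/
  rot_inv : ∀ T R : AngSeq n C S, IsLeftRotation n T R → Theta R → Theta T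
  /-- (N3): commutative squares extend to morphisms of `(n+2)`-angles -/
  n3 : ∀ T T' : AngSeq n C S, Theta T → Theta T' →
    ∀ (φ0 : T.obj 0 ⟶ T'.obj 0) (φ1 : T.obj 1 ⟶ T'.obj 1), T.d 0 ≫ φ1 = φ0 ≫ T'.d 0 →
      ∃ Φ : AngHom T T', Φ.f 0 = φ0 ∧ Φ.f 1 = φ1
  /-- (N4): the fillers can be chosen so that the mapping cone belongs to `Theta` -/
  n4 : ∀ T T' : AngSeq n C S, Theta T → Theta T' →
    ∀ (φ0 : T.obj 0 ⟶ T'.obj 0) (φ1 : T.obj 1 ⟶ T'.obj 1), T.d 0 ≫ φ1 = φ0 ≫ T'.d 0 →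
      ∃ Φ : AngHom T T', Φ.f 0 = φ0 ∧ Φ.f 1 = φ1 ∧
        ∃ M : AngSeq n C S, IsMappingConeSeq n Φ M ∧ Theta M

/-- The `(n+2)`-angulated structure `α` on `C` is `E`-compatible with the
`n`-exangulated structure `σ`: every `(n+2)`-angle, viewed as a complex, is a
distinguished `n`-exangle for some extension `δ`. -/
def ECompatible {n : ℕ} {E : Cᵒᵖ ⥤ C ⥤ AddCommGrpCat.{v}} (σ : NExStruct n C E)
    {S : C ⥤ C} (α : NAngStruct n C S) : Prop :=
  ∀ T : AngSeq n C S, α.Theta T →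
    ∃ (X : ExCpx n C) (h : ∀ i, i ≤ n + 1 → X.obj i = T.obj i),
      (∀ i (hi : i ≤ n), X.d i = eqToHom (h i (by omega)) ≫ T.d i ≫
        eqToHom (h (i + 1) (by omega)).symm) ∧
      ∃ δ : EE E (X.obj (n + 1)) (X.obj 0), σ.Dist X δ

/-- The realization `𝔯` of the bifunctor `E¹ = C(-, Σ-)` induced by the chosen
distinguished `n`-exangles `X → 0 → ⋯ → 0 → ΣX ⇢ δ_X`:
`𝔯(ε) := 𝔰(ε^* δ_{X₀})`, i.e. `⟨X, ε⟩` is `𝔯`-distinguished iff `⟨X, ε^* δ_{X₀}⟩`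
is `𝔰`-distinguished. -/
def DistR {n : ℕ} {E : Cᵒᵖ ⥤ C ⥤ AddCommGrpCat.{v}} (σ : NExStruct n C E) (F : C ⥤ C)
    (δ : ∀ X : C, EE E (F.obj X) X) :
    ∀ X : ExCpx n C, (X.obj (n + 1) ⟶ F.obj (X.obj 0)) → Prop :=
  fun X ε => σ.Dist X (pull ε (δ (X.obj 0)))

/-- Inflations with respect to a hom-valued (i.e. `E¹ = C(-, Σ-)`-valued)
distinguished-`n`-exangle predicate. -/
def HInflationOf {n : ℕ} (F : C ⥤ C)
    (R : ∀ X : ExCpx n C, (X.obj (n + 1) ⟶ F.obj (X.obj 0)) → Prop)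
    {A B : C} (f : A ⟶ B) : Prop :=
  ∃ (X : ExCpx n C) (ε : X.obj (n + 1) ⟶ F.obj (X.obj 0)) (h0 : X.obj 0 = A)
    (h1 : X.obj 1 = B), R X ε ∧ X.d 0 = eqToHom h0 ≫ f ≫ eqToHom h1.symm

/-- Deflations with respect to a hom-valued distinguished-`n`-exangle predicate. -/
def HDeflationOf {n : ℕ} (F : C ⥤ C)
    (R : ∀ X : ExCpx n C, (X.obj (n + 1) ⟶ F.obj (X.obj 0)) → Prop)
    {A B : C} (f : A ⟶ B) : Prop :=
  ∃ (X : ExCpx n C) (ε : X.obj (n + 1) ⟶ F.obj (X.obj 0)) (h0 : X.obj n = A)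
    (h1 : X.obj (n + 1) = B), R X ε ∧ X.d n = eqToHom h0 ≫ f ≫ eqToHom h1.symm

/-!
Given two distinguished `n`-exangles `A → 0 → ⋯ → 0 → B ⇢ δ` and `A → 0 → ⋯ → 0 → D ⇢ η`,
realize `ω = fst^* δ + snd^* η ∈ E(B ⊕ D, A)` by some `S`. Since `inl^* ω = δ`, (EA2) gives
a morphism from the first exangle to `S` whose mapping cone carries the extension
`(A → 0)_* ω = 0`; exactness of the cone at its last term writes `inr` as `d ≫ inl` plus a
map factoring through the last differential of `S`, hence `η = d^* δ`. Symmetrically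
`δ = c^* η`, and since `g ↦ g^* δ` is injective when the penultimate term vanishes, `c` and
`d` are mutually inverse. Applied to `A → 0 → ⋯ → 0 → Y₀` and `A → 0 → ⋯ → 0 → ΣA`, this
gives `ΣA ≅ Y₀`.
-/

end Paper

namespace Paper

variable {C : Type u} [Category.{v} C] {E : Cᵒᵖ ⥤ C ⥤ AddCommGrpCat.{v}}

lemma pull_comp {B B' B'' A : C} (g : B' ⟶ B) (g' : B'' ⟶ B') (δ : EE E B A) :
    pull (g' ≫ g) δ = pull g' (pull g δ) := by
  simp only [pull]
  rw [op_comp, CategoryTheory.Functor.map_comp]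
  rfl

lemma pull_id {B A : C} (δ : EE E B A) : pull (𝟙 B) δ = δ := by
  simp only [pull]
  rw [op_id, CategoryTheory.Functor.map_id]
  rfl

lemma pull_zero {B B' A : C} (g : B' ⟶ B) : pull g (0 : EE E B A) = 0 :=
  map_zero _

lemma pull_add {B B' A : C} (g : B' ⟶ B) (x y : EE E B A) :
    pull g (x + y) = pull g x + pull g y :=
  map_add _ _ _

lemma pull_zero_hom [Preadditive C] [E.Additive] {B B' A : C} (δ : EE E B A) : pull (0 : B' ⟶ B) δ = 0 := by
  simp only [pull]
  rw [op_zero, CategoryTheory.Functor.map_zero]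
  rfl

lemma pull_add_hom [Preadditive C] [E.Additive] {B B' A : C} (g g' : B' ⟶ B) (δ : EE E B A) :
    pull (g + g') δ = pull g δ + pull g' δ := by
  simp only [pull]
  rw [op_add, CategoryTheory.Functor.map_add, NatTrans.app_add, AddCommGrpCat.hom_add_apply]

lemma pull_sub_hom [Preadditive C] [E.Additive] {B B' A : C} (g g' : B' ⟶ B) (δ : EE E B A) :
    pull (g - g') δ = pull g δ - pull g' δ := by
  rw [eq_sub_iff_add_eq, ← pull_add_hom, sub_add_cancel]

lemma push_zero_hom [Preadditive C] [∀ X : Cᵒᵖ, (E.obj X).Additive] {B A A' : C} (δ : EE E B A) :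
    push (0 : A ⟶ A') δ = 0 := by
  simp only [push]
  rw [CategoryTheory.Functor.map_zero]
  rfl

lemma pull_biprod_inl [Preadditive C] [HasBinaryBiproducts C] [E.Additive] {B D A : C} (δ : EE E B A) (η : EE E D A) :
    pull biprod.inl (pull biprod.fst δ + pull biprod.snd η) = δ := by
  rw [pull_add, ← pull_comp, ← pull_comp, biprod.inl_fst, biprod.inl_snd, pull_id,
    pull_zero_hom, add_zero]

lemma pull_biprod_inr [Preadditive C] [HasBinaryBiproducts C] [E.Additive] {B D A : C} (δ : EE E B A) (η : EE E D A) :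
    pull biprod.inr (pull biprod.fst δ + pull biprod.snd η) = η := by
  rw [pull_add, ← pull_comp, ← pull_comp, biprod.inr_fst, biprod.inr_snd, pull_id,
    pull_zero_hom, zero_add]

lemma castE_zero {B B' A A' : C} (hB : B = B') (hA : A = A') :
    castE hB hA (0 : EE E B A) = 0 := by
  subst hB hA
  rfl

lemma castE_castE {B A A' : C} (hA : A = A') (δ : EE E B A') :
    castE rfl hA (castE rfl hA.symm δ) = δ := by
  subst hA
  rfl

lemma pull_castE {B B' A A' : C} (g : B' ⟶ B) (hA : A = A') (δ : EE E B A) :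
    pull g (castE rfl hA δ) = castE rfl hA (pull g δ) := by
  subst hA
  rfl

lemma castE_eq_zero_iff {B A A' : C} (hA : A = A') (δ : EE E B A) :
    castE rfl hA δ = 0 ↔ δ = 0 := by
  subst hA
  rfl

section Realizes

variable [Preadditive C] [HasZeroObject C] [HasFiniteBiproducts C] [HasBinaryBiproducts C]
  {n : ℕ} (σ : NExStruct n C E)

/-- `𝔰(δ) = [X]` for `δ ∈ E(B, A)`, the end terms of `X` being `A` and `B` only up to
equality of objects. -/
def Realizes (X : ExCpx n C) {A B : C} (δ : EE E B A) : Prop :=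
  ∃ (h0 : X.obj 0 = A) (h1 : X.obj (n + 1) = B), σ.Dist X (castE h1.symm h0.symm δ)

variable {σ}

lemma Realizes.of_dist {X : ExCpx n C} {δ : EE E (X.obj (n + 1)) (X.obj 0)}
    (h : σ.Dist X δ) : Realizes σ X δ :=
  ⟨rfl, rfl, h⟩

lemma Realizes.eq_zero_of_pull_eq_zero {X : ExCpx n C} {A B W : C} {δ : EE E B A}
    (hX : Realizes σ X δ) (hXn : IsZero (X.obj n)) {g : W ⟶ B} (hg : pull g δ = 0) :
    g = 0 := by
  obtain ⟨rfl, rfl, hd⟩ := hX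
  obtain ⟨h, rfl⟩ := σ.exact_contra_top X δ hd W g hg
  rw [hXn.eq_of_tgt h 0, zero_comp]

lemma Realizes.eq_id_of_pull_eq [E.Additive] {X : ExCpx n C} {A B : C} {δ : EE E B A}
    (hX : Realizes σ X δ) (hXn : IsZero (X.obj n)) {e : B ⟶ B} (he : pull e δ = δ) :
    e = 𝟙 B :=
  sub_eq_zero.mp <| hX.eq_zero_of_pull_eq_zero hXn <| by rw [pull_sub_hom, he, pull_id, sub_self]

lemma Realizes.exists_pull_eq [∀ X : Cᵒᵖ, (E.obj X).Additive] [E.Additive] (hn : 0 < n)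
    {X S : ExCpx n C} {A B D W : C} {δ : EE E B A} {ρ : EE E D A}
    (hX : Realizes σ X δ) (hS : Realizes σ S ρ) (hX1 : IsZero (X.obj 1))
    (c : B ⟶ D) (hc : pull c ρ = δ) (g : W ⟶ D) : ∃ a : W ⟶ B, pull g ρ = pull a δ := by
  obtain ⟨rfl, rfl, hXd⟩ := hX
  obtain ⟨hS0, rfl, hSd⟩ := hS
  subst hc
  have hXd' : σ.Dist X (castE rfl hS0 (pull c (castE rfl hS0.symm ρ))) := by
    rwa [pull_castE, castE_castE]
  obtain ⟨φ, -, hφc, M, hM0, hMtop, ⟨-, etop, emid, -, -, hMd⟩, hMdist⟩ :=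
    σ.ea2 X S hS0 _ c hSd hXd'
  -- the cone realizes `(A → X₁)_* ρ`, which vanishes because `X₁ = 0`
  have hM : σ.Dist M 0 := by
    rwa [hX1.eq_of_tgt (eqToHom hS0 ≫ X.d 0) 0, push_zero_hom, castE_zero] at hMdist
  obtain ⟨h, hh⟩ := σ.exact_contra_top M 0 hM W (g ≫ eqToHom hMtop.symm) (pull_zero _)
  set u := h ≫ eqToHom (emid n hn le_rfl)
  have hg : g = (u ≫ biprod.fst) ≫ c + (u ≫ biprod.snd) ≫ S.d n := by
    rw [hMd hn, hφc] at hh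
    have := congrArg (· ≫ eqToHom hMtop) hh
    simp only [Category.assoc, eqToHom_trans, eqToHom_refl, Category.comp_id] at this
    rw [← this]
    simp only [u, biprod.desc_eq, Preadditive.comp_add, Category.assoc]
  have hSn : pull (S.d n) ρ = 0 := by
    rw [← castE_eq_zero_iff hS0.symm, ← pull_castE]
    exact σ.attached_pull S _ hSd
  exact ⟨u ≫ biprod.fst, by rw [hg, pull_add_hom, pull_comp, pull_comp (S.d n), hSn, pull_zero,
    add_zero]⟩

lemma Realizes.nonempty_iso [∀ X : Cᵒᵖ, (E.obj X).Additive] [E.Additive] (hn : 0 < n)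
    {X Q : ExCpx n C} {A B D : C} {δ : EE E B A} {η : EE E D A}
    (hX : Realizes σ X δ) (hQ : Realizes σ Q η)
    (hXmid : ∀ i, 1 ≤ i → i ≤ n → IsZero (X.obj i))
    (hQmid : ∀ i, 1 ≤ i → i ≤ n → IsZero (Q.obj i)) : Nonempty (B ≅ D) := by
  obtain ⟨S, hS0, hS1, hSd⟩ := σ.realize (pull biprod.fst δ + pull biprod.snd η)
  have hS : Realizes σ S _ := ⟨hS0, hS1, hSd⟩
  obtain ⟨d, hd⟩ := hX.exists_pull_eq hn hS (hXmid 1 le_rfl hn) _ (pull_biprod_inl δ η)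
    biprod.inr
  obtain ⟨c, hc⟩ := hQ.exists_pull_eq hn hS (hQmid 1 le_rfl hn) _ (pull_biprod_inr δ η)
    biprod.inl
  rw [pull_biprod_inr] at hd
  rw [pull_biprod_inl] at hc
  exact ⟨{ hom := c, inv := d
           hom_inv_id := hX.eq_id_of_pull_eq (hXmid n hn le_rfl) <| by
             rw [pull_comp, ← hd, ← hc]
           inv_hom_id := hQ.eq_id_of_pull_eq (hQmid n hn le_rfl) <| by
             rw [pull_comp, ← hc, ← hd] }⟩

end Realizes

theorem statement_8 {C : Type u} [Category.{v} C] [Preadditive C] [HasZeroObject C]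
    [HasFiniteBiproducts C] [HasBinaryBiproducts C]
    (E : Cᵒᵖ ⥤ C ⥤ AddCommGrpCat.{v}) [∀ X : Cᵒᵖ, (E.obj X).Additive] [E.Additive]
    (n : ℕ) (hn : 0 < n) (σ : NExStruct n C E)
    (htriv : ∀ X : C, TrivialInflation σ X ∧ TrivialDeflation σ X)
    (F : C ⥤ C) (cpx : C → ExCpx n C)
    (hc0 : ∀ X : C, (cpx X).obj 0 = X) (hctop : ∀ X : C, (cpx X).obj (n + 1) = F.obj X)
    (hmid : ∀ (X : C) (i : ℕ), 1 ≤ i → i ≤ n → IsZero ((cpx X).obj i))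
    (δ : ∀ X : C, EE E (F.obj X) X)
    (hdist : ∀ X : C, σ.Dist (cpx X) (castE (hctop X).symm (hc0 X).symm (δ X)))
    (hF : ∀ {X Y : C} (f : X ⟶ Y), push f (δ X) = pull (F.map f) (δ Y)) :
    ∀ Y₀ : C, ∃ X₀ : C, Nonempty (F.obj X₀ ≅ Y₀) := by
  intro Y₀
  obtain ⟨X, δ', hdX, hXtop, hXmid⟩ := (htriv Y₀).2
  have hcpx : Realizes σ (cpx (X.obj 0)) (δ (X.obj 0)) := ⟨hc0 _, hctop _, hdist _⟩
  obtain ⟨e⟩ := (Realizes.of_dist hdX).nonempty_iso hn hcpx hXmid (hmid _)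
  exact ⟨X.obj 0, ⟨e.symm ≪≫ eqToIso hXtop⟩⟩

end Paper
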